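/- Let Σ = (T, Q, Tr) be a NCMS, Tr₀ the set of its initial trajectories, and Tr' the set of all restrictions s|_I of trajectories s ∈ Tr₀ to intervals I ∈ 𝔗 with I ⊆ dom(s). Then Tr' is Markovian: if s₁, s₂ ∈ Tr' with t₀ = sup dom(s₁) = inf dom(s₂), both defined at t₀ with s₁(t₀) = s₂(t₀), then the gluing of s₁ and s₂ belongs to Tr'. -/

import Mathlib

open Set

/-- Partial functions from the time scale `T = [0,∞) ⊆ ℝ` to `Q`, represented as
`ℝ → Option Q` (the graph is `{(t,v) | s t = some v}`). -/
abbrev PF (Q : Type*) := ℝ → Option Q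

/-- Domain of a partial function. -/
def pdom {Q : Type*} (s : PF Q) : Set ℝ := {t | s t ≠ none}

/-- Range of a partial function. -/
def pran {Q : Type*} (s : PF Q) : Set Q := {q | ∃ t, s t = some q}

/-- Graph inclusion `s₁ ⊑ s₂`. -/
def ple {Q : Type*} (s₁ s₂ : PF Q) : Prop := ∀ t v, s₁ t = some v → s₂ t = some v

/-- `A ∈ 𝔗`: an interval (order-connected subset) of `T = [0,∞)` with more than one point. -/
def IsTimeInterval (A : Set ℝ) : Prop :=
  A ⊆ Ici (0 : ℝ) ∧ A.OrdConnected ∧ A.Nontrivial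

/-- A (partial) trajectory: a partial function whose domain belongs to `𝔗`. -/
def IsTraj {Q : Type*} (s : PF Q) : Prop := IsTimeInterval (pdom s)

open Classical in
/-- Restriction `s|_A` of a partial function to a set. -/
noncomputable def prestrict {Q : Type*} (s : PF Q) (A : Set ℝ) : PF Q :=
  fun t => if t ∈ A then s t else none

/-- Gluing: `s₁` on `pdom s₁`, `s₂` elsewhere. -/
def pglue {Q : Type*} (s₁ s₂ : PF Q) : PF Q := fun t => (s₁ t).orElse (fun _ => s₂ t)

/-- Closed under proper restrictions. -/
def CPR {Q : Type*} (Tr : Set (PF Q)) : Prop :=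
  ∀ s ∈ Tr, ∀ A : Set ℝ, IsTimeInterval A → A ⊆ pdom s → prestrict s A ∈ Tr

/-- The Markovian property. -/
def Markovian {Q : Type*} (Tr : Set (PF Q)) : Prop :=
  ∀ s₁ ∈ Tr, ∀ s₂ ∈ Tr, ∀ t₀ : ℝ,
    IsLUB (pdom s₁) t₀ → IsGLB (pdom s₂) t₀ →
    t₀ ∈ pdom s₁ → t₀ ∈ pdom s₂ → s₁ t₀ = s₂ t₀ →
    pglue s₁ s₂ ∈ Tr

/-- `s` is a supremum of `C` in the poset `(·, ⊑)`. -/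
def IsSupOf {Q : Type*} (C : Set (PF Q)) (s : PF Q) : Prop :=
  (∀ c ∈ C, ple c s) ∧ ∀ u : PF Q, (∀ c ∈ C, ple c u) → ple s u

/-- Completeness: every nonempty chain in `(Tr, ⊑)` has a supremum in `Tr`. -/
def Complete {Q : Type*} (Tr : Set (PF Q)) : Prop :=
  ∀ C ⊆ Tr, C.Nonempty → IsChain ple C → ∃ s ∈ Tr, IsSupOf C s

/-- `(T, S, Tr)` is a nondeterministic complete Markovian system. -/
structure IsNCMS {Q : Type*} (S : Set Q) (Tr : Set (PF Q)) : Prop where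
  valued : ∀ s ∈ Tr, pran s ⊆ S
  traj : ∀ s ∈ Tr, IsTraj s
  cpr : CPR Tr
  markov : Markovian Tr
  complete : Complete Tr

/-- `(T,S',Tr')` is a sub-NCMS of `(T,S,Tr)`. -/
def SubNCMS {Q : Type*} (S' : Set Q) (Tr' : Set (PF Q)) (S : Set Q) (Tr : Set (PF Q)) : Prop :=
  IsNCMS S' Tr' ∧ S' ⊆ S ∧ Tr' ⊆ Tr

/-- A trajectory is initial if it is defined at time `0`. -/
def Initial {Q : Type*} (s : PF Q) : Prop := 0 ∈ pdom s

/-- `s₂` is a backward extension of `s₁`: `s₁ ⊏ s₂` (proper graph inclusion) and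
`t₂ ≤ t₁` for all `(t₁,t₂) ∈ dom s₁ × dom s₂`. -/
def BackExt {Q : Type*} (s₁ s₂ : PF Q) : Prop :=
  ple s₁ s₂ ∧ ¬ ple s₂ s₁ ∧ ∀ t₁ ∈ pdom s₁, ∀ t₂ ∈ pdom s₂, t₂ ≤ t₁

/-- `s₂` is a `τ`-backward escape from `s` at time `d`: `s₂ : [c,d] → Q`, `c < d`,
`τ = d - c`, `s₂ d = s d`. -/
def BackEscape {Q : Type*} (s s₂ : PF Q) (d τ : ℝ) : Prop :=
  ∃ c : ℝ, c < d ∧ τ = d - c ∧ pdom s₂ = Icc c d ∧ s₂ d = s d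

/-- A function of class `K` on `ℝ₊`: continuous, strictly increasing, `f 0 = 0`,
nonnegative-valued. -/
def ClassK (f : ℝ → ℝ) : Prop :=
  ContinuousOn f (Ici 0) ∧ StrictMonoOn f (Ici 0) ∧ f 0 = 0 ∧
    ∀ x ∈ Ici (0 : ℝ), f x ∈ Ici (0 : ℝ)

/-- `f`-backward extensibility of a trajectory set. -/
def FBackExt {Q : Type*} (f : ℝ → ℝ) (Tr : Set (PF Q)) : Prop :=
  ∀ s ∈ Tr,
    Initial s ∨
    (∃ s' ∈ Tr, BackExt s s') ∨
    ((¬ ∃ m, IsLeast (pdom s) m) ∧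
      ∃ s' ∈ Tr, ∃ t ∈ pdom s, (∃ t' ∈ pdom s, t < t') ∧
        ∃ τ : ℝ, f (t - sInf (pdom s)) ≤ τ ∧ BackEscape s s' t τ)

/-- The `t₀`-reach set. -/
def ReachSet {Q : Type*} (Tr : Set (PF Q)) (t₀ : ℝ) : Set Q :=
  {q | ∃ s ∈ Tr, Initial s ∧ ∃ t ∈ pdom s ∩ Icc 0 t₀, s t = some q}

/-- The `t₀`-right range set. -/
def RightRange {Q : Type*} (Tr : Set (PF Q)) (t₀ : ℝ) : Set Q :=
  {q | ∃ s ∈ Tr, pdom s ⊆ Icc 0 t₀ ∧ ∃ b, IsGreatest (pdom s) b ∧ s b = some q}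

/-- All restrictions of initial trajectories of `Tr` to intervals in `𝔗` contained
in their domains. -/
def Restrictions {Q : Type*} (Tr : Set (PF Q)) : Set (PF Q) :=
  {s' | ∃ s ∈ Tr, Initial s ∧ ∃ A : Set ℝ, IsTimeInterval A ∧ A ⊆ pdom s ∧ s' = prestrict s A}

section PartialFunctions

variable {Q : Type*}

lemma prestrict_of_mem {s : PF Q} {A : Set ℝ} {t : ℝ} (ht : t ∈ A) :
    prestrict s A t = s t :=
  if_pos ht

lemma pdom_prestrict {s : PF Q} {A : Set ℝ} (h : A ⊆ pdom s) : pdom (prestrict s A) = A := by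
  ext t
  by_cases ht : t ∈ A
  · show prestrict s A t ≠ none ↔ t ∈ A
    rw [prestrict_of_mem ht]
    exact iff_of_true (h ht) ht
  · simp [pdom, prestrict, ht]

lemma prestrict_prestrict (s : PF Q) (A B : Set ℝ) :
    prestrict (prestrict s A) B = prestrict s (A ∩ B) := by
  funext t
  by_cases hA : t ∈ A <;> by_cases hB : t ∈ B <;> simp [prestrict, hA, hB]

lemma prestrict_pglue (u v : PF Q) (A : Set ℝ) :
    prestrict (pglue u v) A = pglue (prestrict u A) (prestrict v A) := by
  funext t
  by_cases hA : t ∈ A <;> simp [prestrict, pglue, hA]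

lemma pdom_pglue (u v : PF Q) : pdom (pglue u v) = pdom u ∪ pdom v := by
  ext t
  cases hu : u t <;> simp [pdom, pglue, hu]

end PartialFunctions

section TimeIntervals

lemma IsTimeInterval.union {A B : Set ℝ} (hA : IsTimeInterval A) (hB : IsTimeInterval B)
    (hAB : (A ∩ B).Nonempty) : IsTimeInterval (A ∪ B) := by
  refine ⟨union_subset hA.1 hB.1, ?_, hA.2.2.mono subset_union_left⟩
  exact isPreconnected_iff_ordConnected.1 <| (isPreconnected_iff_ordConnected.2 hA.2.1).union'
    hAB (isPreconnected_iff_ordConnected.2 hB.2.1)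

lemma IsTimeInterval.pos_of_mem_upperBounds {A : Set ℝ} {t₀ : ℝ} (hA : IsTimeInterval A)
    (ht₀ : t₀ ∈ upperBounds A) : 0 < t₀ := by
  obtain ⟨a, ha, b, hb, hab⟩ := hA.2.2.exists_lt
  exact (hA.1 ha).trans_lt (hab.trans_le (ht₀ hb))

lemma IsTimeInterval.inter_Iic {A : Set ℝ} {a b : ℝ} (hA : IsTimeInterval A) (ha : a ∈ A)
    (hb : b ∈ A) (hab : a < b) : IsTimeInterval (A ∩ Iic b) :=
  ⟨inter_subset_left.trans hA.1, hA.2.1.inter ordConnected_Iic,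
    ⟨a, ⟨ha, hab.le⟩, b, ⟨hb, mem_Iic.2 le_rfl⟩, hab.ne⟩⟩

end TimeIntervals

lemma pglue_prestrict_Iic_mem {Q : Type*} {Tr : Set (PF Q)} (hcpr : CPR Tr)
    (hmarkov : Markovian Tr) {r s : PF Q} (hr : r ∈ Tr) (hrtraj : IsTraj r) (hs : s ∈ Tr)
    {a t₀ : ℝ} (ha : a ∈ pdom r) (ht₀ : t₀ ∈ pdom r) (hat₀ : a < t₀) (hglb : IsGLB (pdom s) t₀)
    (ht₀s : t₀ ∈ pdom s) (hval : r t₀ = s t₀) :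
    pglue (prestrict r (pdom r ∩ Iic t₀)) s ∈ Tr := by
  have hsub : pdom r ∩ Iic t₀ ⊆ pdom r := inter_subset_left
  have ht₀mem : t₀ ∈ pdom r ∩ Iic t₀ := ⟨ht₀, mem_Iic.2 le_rfl⟩
  refine hmarkov _ (hcpr r hr _ (hrtraj.inter_Iic ha ht₀ hat₀) hsub) s hs t₀ ?_ hglb
    (by rwa [pdom_prestrict hsub]) ht₀s (by rwa [prestrict_of_mem ht₀mem])
  rw [pdom_prestrict hsub]
  exact IsGreatest.isLUB ⟨ht₀mem, fun _ ht => ht.2⟩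

/-- the set of restrictions of initial trajectories is Markovian. -/
theorem stmt_3 {Q : Type*} (S : Set Q) (Tr : Set (PF Q)) (h : IsNCMS S Tr) :
    Markovian (Restrictions Tr) := by
  rintro _ ⟨r₁, hr₁, hr₁0, A₁, hA₁, hA₁r₁, rfl⟩ _ ⟨r₂, hr₂, -, A₂, hA₂, hA₂r₂, rfl⟩
    t₀ hlub hglb ht₁ ht₂ hval
  rw [pdom_prestrict hA₁r₁] at hlub ht₁
  have ht₀pos : 0 < t₀ := hA₁.pos_of_mem_upperBounds hlub.1
  rw [prestrict_of_mem ht₁] at hval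
  -- `r₁` cut off at `t₀` and glued to the second piece is an initial trajectory of `Tr`;
  -- its restriction to `A₁ ∪ A₂` is the gluing of the two pieces.
  have hr := pglue_prestrict_Iic_mem h.cpr h.markov hr₁ (h.traj r₁ hr₁)
    (h.cpr r₂ hr₂ A₂ hA₂ hA₂r₂) hr₁0 (hA₁r₁ ht₁) ht₀pos hglb ht₂ hval
  rw [pdom_prestrict hA₂r₂] at hglb ht₂
  have hA₁cut : A₁ ⊆ pdom r₁ ∩ Iic t₀ := fun t ht => ⟨hA₁r₁ ht, hlub.1 ht⟩
  have hdom : pdom (pglue (prestrict r₁ (pdom r₁ ∩ Iic t₀)) (prestrict r₂ A₂)) =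
      (pdom r₁ ∩ Iic t₀) ∪ A₂ := by
    rw [pdom_pglue, pdom_prestrict inter_subset_left, pdom_prestrict hA₂r₂]
  have hcut : (pdom r₁ ∩ Iic t₀) ∩ (A₁ ∪ A₂) = A₁ := by
    refine Subset.antisymm ?_ fun t ht => ⟨hA₁cut ht, Or.inl ht⟩
    rintro t ⟨⟨-, hle⟩, ht | ht⟩
    · exact ht
    · exact le_antisymm hle (hglb.1 ht) ▸ ht₁
  refine ⟨_, hr, ?_, A₁ ∪ A₂, hA₁.union hA₂ ⟨t₀, ht₁, ht₂⟩, ?_, ?_⟩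
  · rw [Initial, hdom]
    exact Or.inl ⟨hr₁0, ht₀pos.le⟩
  · rw [hdom]
    exact union_subset_union_left _ hA₁cut
  · rw [prestrict_pglue, prestrict_prestrict, prestrict_prestrict, hcut,
      inter_eq_left.2 subset_union_right]
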